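/- arXiv:2209.14468 — 7 statements merged into one kernel-verified Lean document; each statement's English description precedes it below -/
import Mathlib

section
/- If a committee W of size at most k is Lindahl priceable, then W lies in the core. -/
/-!
Each voter of a blocking coalition `S` strictly prefers `T`, so under Lindahl prices she would
pay more than her unit budget for `T`: the coalition pays more than `|S|` in total. But no
candidate collects more than `n/k`, so `T` costs at most `|T| · n/k ≤ |S|` overall.
-/

open Finset

section Payments

variable {ι α : Type*}

lemma card_lt_sum_sum_of_one_lt {S : Finset ι} (T : Finset α) {p : ι → α → ℝ}
    (hS : S.Nonempty) (h : ∀ i ∈ S, 1 < ∑ j ∈ T, p i j) :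
    (#S : ℝ) < ∑ i ∈ S, ∑ j ∈ T, p i j := by
  simpa using sum_lt_sum_of_nonempty hS h

lemma sum_sum_le_card_mul_of_sum_le [Fintype ι] {p : ι → α → ℝ} {R : ℝ}
    (hp : ∀ i j, 0 ≤ p i j) (hcol : ∀ j, ∑ i, p i j ≤ R) (S : Finset ι) (T : Finset α) :
    ∑ i ∈ S, ∑ j ∈ T, p i j ≤ #T * R :=
  calc ∑ i ∈ S, ∑ j ∈ T, p i j
      ≤ ∑ i, ∑ j ∈ T, p i j :=
        sum_le_sum_of_subset_of_nonneg (subset_univ S) fun i _ _ =>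
          sum_nonneg fun j _ => hp i j
    _ = ∑ j ∈ T, ∑ i, p i j := sum_comm
    _ ≤ ∑ _j ∈ T, R := sum_le_sum fun j _ => hcol j
    _ = #T * R := by rw [sum_const, nsmul_eq_mul]

end Payments

theorem lindahl_priceable_implies_core_general
    (n m k : ℕ) (hn : 0 < n) (hk : 0 < k)
    (A : Fin n → Finset (Fin m)) (W : Finset (Fin m))
    (p : Fin n → Fin m → ℝ)
    (hp : ∀ i j, 0 ≤ p i j)
    (hcol : ∀ j, ∑ i, p i j ≤ (n : ℝ) / k)
    (hprice : ∀ (i : Fin n) (T : Finset (Fin m)),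
      (W ∩ A i).card + 1 ≤ (T ∩ A i).card → 1 < ∑ j ∈ T, p i j) :
    ¬ ∃ (S : Finset (Fin n)) (T : Finset (Fin m)), S.Nonempty ∧
      (T.card : ℝ) ≤ (S.card : ℝ) * k / n ∧
      ∀ i ∈ S, (W ∩ A i).card < (T ∩ A i).card := by
  rintro ⟨S, T, hS, hT, hblock⟩
  have hpaid := card_lt_sum_sum_of_one_lt T hS fun i hi => hprice i T (hblock i hi)
  have hbudget := sum_sum_le_card_mul_of_sum_le hp hcol S T
  have hcost : (#T : ℝ) * (n / k) ≤ #S :=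
    calc (#T : ℝ) * (n / k)
        ≤ #S * k / n * (n / k) := by gcongr
      _ = #S := by field_simp
  linarith

/-- If a committee `W` of size at most `k` is Lindahl priceable, then `W` lies in the core.
Approval election: `n` voters, `m` unit-size candidates, voter `i` approves `A i`,
utility of `T` for voter `i` is `|A i ∩ T|`, `R = n/k`. -/
theorem lindahl_priceable_implies_core
    (n m k : ℕ) (hn : 0 < n) (hk : 0 < k)
    (A : Fin n → Finset (Fin m)) (W : Finset (Fin m)) (hW : W.card ≤ k)
    (p : Fin n → Fin m → ℝ)
    (hp : ∀ i j, 0 ≤ p i j)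
    (hcol : ∀ j, ∑ i, p i j ≤ (n : ℝ) / k)
    (hprice : ∀ (i : Fin n) (T : Finset (Fin m)),
      (W ∩ A i).card + 1 ≤ (T ∩ A i).card → 1 < ∑ j ∈ T, p i j) :
    ¬ ∃ (S : Finset (Fin n)) (T : Finset (Fin m)), S.Nonempty ∧
      (T.card : ℝ) ≤ (S.card : ℝ) * k / n ∧
      ∀ i ∈ S, (W ∩ A i).card < (T ∩ A i).card :=
  lindahl_priceable_implies_core_general n m k hn hk A W p hp hcol hprice
end

section
/- If a committee W of size at most k is weakly priceable, then W lies in the sub-core. -/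
/-!
A deviating coalition `S` would have to buy `T` at the prices `p`. Each member strictly gains a
candidate `d ∉ W`, and weak priceability makes her prices on `A i ∩ T ⊇ insert d (A i ∩ W)`
exceed `1`, so the coalition pays more than `|S|` in total. But no candidate is priced above
`n / k` overall, so `T` costs at most `|T| · n / k ≤ |S|`.
-/

open Finset

section Pricing

variable {ι α : Type*} [DecidableEq α]

theorem one_lt_sum_of_inter_ssubset_inter {p : α → ℝ} {A W T : Finset α} (hp : ∀ j, 0 ≤ p j)
    (hprice : ∀ d ∈ A \ W, 1 < p d + ∑ j ∈ A ∩ W, p j) (hdev : A ∩ W ⊂ A ∩ T) :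
    1 < ∑ j ∈ A ∩ T, p j := by
  obtain ⟨d, hdT, hdW⟩ := exists_of_ssubset hdev
  have hdA : d ∈ A := (mem_inter.mp hdT).1
  calc 1 < p d + ∑ j ∈ A ∩ W, p j :=
        hprice d (mem_sdiff.mpr ⟨hdA, fun h => hdW (mem_inter.mpr ⟨hdA, h⟩)⟩)
    _ = ∑ j ∈ insert d (A ∩ W), p j := (sum_insert hdW).symm
    _ ≤ ∑ j ∈ A ∩ T, p j :=
        sum_le_sum_of_subset_of_nonneg (insert_subset hdT hdev.subset) fun j _ _ => hp j

theorem sum_sum_inter_le_card_mul [Fintype ι] {p : ι → α → ℝ} {R : ℝ} (hp : ∀ i j, 0 ≤ p i j)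
    (hcol : ∀ j, ∑ i, p i j ≤ R) (A : ι → Finset α) (S : Finset ι) (T : Finset α) :
    ∑ i ∈ S, ∑ j ∈ A i ∩ T, p i j ≤ T.card * R :=
  calc ∑ i ∈ S, ∑ j ∈ A i ∩ T, p i j
      ≤ ∑ i ∈ S, ∑ j ∈ T, p i j :=
        sum_le_sum fun i _ => sum_le_sum_of_subset_of_nonneg inter_subset_right fun j _ _ => hp i j
    _ ≤ ∑ i, ∑ j ∈ T, p i j :=
        sum_le_sum_of_subset_of_nonneg (subset_univ S) fun i _ _ => sum_nonneg fun j _ => hp i j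
    _ = ∑ j ∈ T, ∑ i, p i j := sum_comm
    _ ≤ T.card * R := by simpa using sum_le_card_nsmul T _ R fun j _ => hcol j

end Pricing

theorem weakly_priceable_implies_subcore_general
    (n m k : ℕ)
    (A : Fin n → Finset (Fin m)) (W : Finset (Fin m))
    (p : Fin n → Fin m → ℝ)
    (hp : ∀ i j, 0 ≤ p i j)
    (hcol : ∀ j, ∑ i, p i j ≤ (n : ℝ) / k)
    (hprice : ∀ (i : Fin n), ∀ d ∈ A i \ W, 1 < p i d + ∑ j ∈ A i ∩ W, p i j) :
    ¬ ∃ (S : Finset (Fin n)) (T : Finset (Fin m)), S.Nonempty ∧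
      (T.card : ℝ) ≤ (S.card : ℝ) * k / n ∧
      ∀ i ∈ S, A i ∩ W ⊂ A i ∩ T := by
  rintro ⟨S, T, hSne, hTcard, hdev⟩
  have hpaid : (S.card : ℝ) < ∑ i ∈ S, ∑ j ∈ A i ∩ T, p i j := by
    simpa using sum_lt_sum_of_nonempty hSne fun i hi =>
      one_lt_sum_of_inter_ssubset_inter (hp i) (hprice i) (hdev i hi)
  have hcost : (T.card : ℝ) * (n / k) ≤ S.card :=
    calc (T.card : ℝ) * (n / k) ≤ S.card * k / n * (n / k) := by gcongr
      -- `x / x ≤ 1` also holds at `x = 0`, so `k = 0` or `n = 0` need no separate case.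
      _ = S.card * (k * n / (k * n)) := by ring
      _ ≤ S.card := mul_le_of_le_one_right (Nat.cast_nonneg _) (div_self_le_one _)
  linarith [sum_sum_inter_le_card_mul hp hcol A S T]

/-- If a committee `W` of size at most `k` is weakly priceable, then `W` lies in the sub-core. -/
theorem weakly_priceable_implies_subcore
    (n m k : ℕ) (hn : 0 < n) (hk : 0 < k)
    (A : Fin n → Finset (Fin m)) (W : Finset (Fin m)) (hW : W.card ≤ k)
    (p : Fin n → Fin m → ℝ)
    (hp : ∀ i j, 0 ≤ p i j)
    (hcol : ∀ j, ∑ i, p i j ≤ (n : ℝ) / k)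
    (hprice : ∀ (i : Fin n), ∀ d ∈ A i \ W, 1 < p i d + ∑ j ∈ A i ∩ W, p i j) :
    ¬ ∃ (S : Finset (Fin n)) (T : Finset (Fin m)), S.Nonempty ∧
      (T.card : ℝ) ≤ (S.card : ℝ) * k / n ∧
      ∀ i ∈ S, A i ∩ W ⊂ A i ∩ T :=
  weakly_priceable_implies_subcore_general n m k A W p hp hcol hprice
end

section
/- In an approval election in which every voter approves at most 2 candidates, a committee W lies in the core if and only if it lies in the sub-core. -/
/-! A voter who approves at most two candidates gains approved members exactly when the set of
approved members grows strictly: with `x, y ⊆ a` and `|a| ≤ 2`, `|x| < |y|` forces either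
`x = ∅ ≠ y` or `y = a ≠ x`. So the core and sub-core blocking conditions agree voter by voter. -/

namespace Finset

variable {α : Type*}

lemma ssubset_of_card_lt_of_subset_of_card_le_two {x y a : Finset α} (hx : x ⊆ a) (hy : y ⊆ a)
    (ha : #a ≤ 2) (h : #x < #y) : x ⊂ y := by
  rcases Nat.lt_or_ge #y 2 with hy1 | hy2
  · obtain rfl : x = ∅ := card_eq_zero.mp (by omega)
    exact empty_ssubset.mpr (card_pos.mp (by omega))
  · obtain rfl : y = a := eq_of_subset_of_card_le hy (by omega)
    exact ssubset_of_subset_of_ne hx (by rintro rfl; omega)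

lemma card_lt_card_iff_ssubset_of_subset_of_card_le_two {x y a : Finset α} (hx : x ⊆ a)
    (hy : y ⊆ a) (ha : #a ≤ 2) : #x < #y ↔ x ⊂ y :=
  ⟨ssubset_of_card_lt_of_subset_of_card_le_two hx hy ha, card_lt_card⟩

lemma card_inter_lt_card_inter_iff_ssubset_of_card_le_two [DecidableEq α] {a : Finset α}
    (w t : Finset α) (ha : #a ≤ 2) : #(w ∩ a) < #(t ∩ a) ↔ a ∩ w ⊂ a ∩ t := by
  rw [inter_comm w, inter_comm t]
  exact card_lt_card_iff_ssubset_of_subset_of_card_le_two inter_subset_left inter_subset_left ha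

end Finset

theorem core_iff_subcore_of_approvals_le_two_general
    (n m k : ℕ)
    (A : Fin n → Finset (Fin m)) (hA2 : ∀ i, (A i).card ≤ 2)
    (W : Finset (Fin m)) :
    (¬ ∃ (S : Finset (Fin n)) (T : Finset (Fin m)), S.Nonempty ∧
      (T.card : ℝ) ≤ (S.card : ℝ) * k / n ∧
      ∀ i ∈ S, (W ∩ A i).card < (T ∩ A i).card)
    ↔
    (¬ ∃ (S : Finset (Fin n)) (T : Finset (Fin m)), S.Nonempty ∧
      (T.card : ℝ) ≤ (S.card : ℝ) * k / n ∧
      ∀ i ∈ S, A i ∩ W ⊂ A i ∩ T) := by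
  simp only [Finset.card_inter_lt_card_inter_iff_ssubset_of_card_le_two _ _ (hA2 _)]

/-- In an approval election in which every voter approves at most 2 candidates,
a committee `W` lies in the core if and only if it lies in the sub-core. -/
theorem core_iff_subcore_of_approvals_le_two
    (n m k : ℕ) (hn : 0 < n) (hk : 0 < k)
    (A : Fin n → Finset (Fin m)) (hA2 : ∀ i, (A i).card ≤ 2)
    (W : Finset (Fin m)) (hW : W.card ≤ k) :
    (¬ ∃ (S : Finset (Fin n)) (T : Finset (Fin m)), S.Nonempty ∧
      (T.card : ℝ) ≤ (S.card : ℝ) * k / n ∧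
      ∀ i ∈ S, (W ∩ A i).card < (T ∩ A i).card)
    ↔
    (¬ ∃ (S : Finset (Fin n)) (T : Finset (Fin m)), S.Nonempty ∧
      (T.card : ℝ) ≤ (S.card : ℝ) * k / n ∧
      ∀ i ∈ S, A i ∩ W ⊂ A i ∩ T) :=
  core_iff_subcore_of_approvals_le_two_general n m k A hA2 W
end

section
/- In the integrality-gap instance, the committee W consisting of all group candidates C_1,…,C_p and p dummy candidates satisfies θ_c ≥ 1/2: for any nonempty deviating set S of voters and deviating committee T, |T| ≥ |S|/2 + 1, hence R·|T|/|S| ≥ 1/2 (with R = 1). -/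
/-!
A voter of `V_ℓ` already has utility `2^ℓ - 1` under `W`, so she can only prefer a committee `T`
with `|T| ≥ 2^ℓ`. Listing the voters group by group, `V_1, …, V_m` with `2^m ≤ |T|` fill the first
`2^(m+1) - 2 ≤ 2|T| - 2` positions, so any deviating coalition has `|S| ≤ 2|T| - 2`.
-/

attribute [local instance] Classical.propDecidable

/-- Voters of the integrality-gap instance: group `V_ℓ` (for `ℓ : Fin p`, representing
the paper's group `ℓ+1`) contains `2^(ℓ+1)` voters. -/
abbrev GapVoter (p : ℕ) := Σ ℓ : Fin p, Fin (2 ^ (ℓ.1 + 1))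

/-- Candidates: group `C_q` of `2^(q+1) - 1` candidates approved only by `V_q`,
a group `C'` of `2^p` candidates approved by all voters, and `p` dummy candidates. -/
abbrev GapCand (p : ℕ) := (Σ q : Fin p, Fin (2 ^ (q.1 + 1) - 1)) ⊕ (Fin (2 ^ p) ⊕ Fin p)

/-- Approval sets of the integrality-gap instance. -/
noncomputable def gapA (p : ℕ) (v : GapVoter p) : Finset (GapCand p) :=
  Finset.univ.filter (fun c => match c with
    | Sum.inl ⟨q, _⟩ => q = v.1
    | Sum.inr (Sum.inl _) => True
    | Sum.inr (Sum.inr _) => False)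

/-- The committee `W = (∪_q C_q) ∪ dummies` of the integrality-gap instance. -/
noncomputable def gapW (p : ℕ) : Finset (GapCand p) :=
  Finset.univ.filter (fun c => match c with
    | Sum.inr (Sum.inl _) => False
    | _ => True)

open Finset

lemma Nat.two_le_two_pow_succ (ℓ : ℕ) : 2 ≤ 2 ^ (ℓ + 1) :=
  Nat.le_self_pow (Nat.succ_ne_zero ℓ) 2

namespace GapVoter

variable {p : ℕ}

/-- Lists the voters group by group: the group `ℓ : Fin p` occupies `[2^(ℓ+1) - 2, 2^(ℓ+2) - 2)`. -/
def index (v : GapVoter p) : ℕ := 2 ^ (v.1.1 + 1) - 2 + v.2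

lemma index_add_two_lt (v : GapVoter p) : v.index + 2 < 2 * 2 ^ (v.1.1 + 1) := by
  have := Nat.two_le_two_pow_succ v.1.1
  have := v.2.2
  unfold index
  omega

lemma log_index_add_two (v : GapVoter p) : Nat.log 2 (v.index + 2) = v.1.1 + 1 := by
  apply Nat.log_eq_of_pow_le_of_lt_pow
  · have := Nat.two_le_two_pow_succ v.1.1
    unfold index
    omega
  · simpa [pow_succ, mul_comm] using v.index_add_two_lt

lemma index_injective : Function.Injective (index : GapVoter p → ℕ) := by
  rintro ⟨ℓ, j⟩ ⟨ℓ', j'⟩ h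
  have hlog := congrArg (fun n => Nat.log 2 (n + 2)) h
  simp only [log_index_add_two, Nat.add_right_cancel_iff] at hlog
  obtain rfl : ℓ = ℓ' := Fin.ext hlog
  obtain rfl : j = j' := Fin.ext <| by simpa [index] using h
  rfl

lemma card_filter_two_pow_le (z : ℕ) :
    #{v : GapVoter p | 2 ^ (v.1.1 + 1) ≤ z} ≤ 2 * z - 2 := by
  have hmaps : ∀ v ∈ ({v | 2 ^ (v.1.1 + 1) ≤ z} : Finset (GapVoter p)),
      v.index ∈ range (2 * z - 2) := fun v hv => by
    have := index_add_two_lt v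
    rw [mem_filter] at hv
    rw [mem_range]
    omega
  simpa using card_le_card_of_injOn index hmaps index_injective.injOn

end GapVoter

lemma gapW_inter_gapA (p : ℕ) (i : GapVoter p) :
    gapW p ∩ gapA p i =
      univ.map ((Function.Embedding.sigmaMk i.1).trans Function.Embedding.inl) := by
  ext (⟨q, t⟩ | c | c)
  · simp only [gapW, gapA, mem_inter, mem_filter, mem_univ, true_and, mem_map,
      Function.Embedding.trans_apply, Function.Embedding.sigmaMk_apply,
      Function.Embedding.inl_apply, Sum.inl.injEq, Sigma.mk.injEq]
    exact ⟨by rintro rfl; exact ⟨t, rfl, HEq.rfl⟩, by rintro ⟨_, rfl, -⟩; rfl⟩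
  all_goals simp [gapW, gapA]

lemma card_gapW_inter_gapA (p : ℕ) (i : GapVoter p) :
    #(gapW p ∩ gapA p i) = 2 ^ (i.1.1 + 1) - 1 := by
  simp [gapW_inter_gapA]

lemma two_pow_le_card_of_deviates {p : ℕ} {i : GapVoter p} {T : Finset (GapCand p)}
    (h : #(gapW p ∩ gapA p i) < #(T ∩ gapA p i)) : 2 ^ (i.1.1 + 1) ≤ #T := by
  have := card_le_card (inter_subset_left (s₁ := T) (s₂ := gapA p i))
  have := Nat.one_le_two_pow (n := i.1.1 + 1)
  rw [card_gapW_inter_gapA] at h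
  omega

theorem integrality_gap_theta_c_ge_half_general (p : ℕ)
    (S : Finset (GapVoter p)) (T : Finset (GapCand p))
    (hS : S.Nonempty)
    (hdev : ∀ i ∈ S, (gapW p ∩ gapA p i).card < (T ∩ gapA p i).card) :
    (S.card : ℝ) / 2 + 1 ≤ (T.card : ℝ) ∧
    (1 / 2 : ℝ) ≤ 1 * (T.card : ℝ) / (S.card : ℝ) := by
  have hbound i (hi : i ∈ S) := two_pow_le_card_of_deviates (hdev i hi)
  have hT : 2 ≤ #T := by
    obtain ⟨i, hi⟩ := hS
    exact (Nat.two_le_two_pow_succ _).trans (hbound i hi)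
  have hST : #S ≤ 2 * #T - 2 :=
    (card_le_card fun i hi => by simpa using hbound i hi).trans
      (GapVoter.card_filter_two_pow_le #T)
  have hST' : (#S : ℝ) + 2 ≤ 2 * #T := by exact_mod_cast (by omega : #S + 2 ≤ 2 * #T)
  have hSpos : (0 : ℝ) < #S := by exact_mod_cast hS.card_pos
  refine ⟨by linarith, ?_⟩
  rw [le_div_iff₀ hSpos]
  linarith

/-- In the integrality-gap instance (with `R = n/k = 1`), every deviation `(S, T)`
(each voter of `S` gets strictly larger utility from `T` than from `W`) satisfies
`|T| ≥ |S|/2 + 1`, hence `R·|T|/|S| ≥ 1/2`; i.e. `θ_c ≥ 1/2`. -/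
theorem integrality_gap_theta_c_ge_half (p : ℕ) (hp : 1 ≤ p)
    (S : Finset (GapVoter p)) (T : Finset (GapCand p))
    (hS : S.Nonempty)
    (hdev : ∀ i ∈ S, (gapW p ∩ gapA p i).card < (T ∩ gapA p i).card) :
    (S.card : ℝ) / 2 + 1 ≤ (T.card : ℝ) ∧
    (1 / 2 : ℝ) ≤ 1 * (T.card : ℝ) / (S.card : ℝ) :=
  integrality_gap_theta_c_ge_half_general p S T hS hdev
end

section
/- A committee W has Lindahl priceability ratio θ_ℓ equal to the optimal value θ_p of the LP relaxation of the core auditing program; in particular, testing whether W is Lindahl priceable can be done by solving this LP. -/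
/-!
Weak duality: a fractional solution `(x, z, y)` of the audit LP pays, voter by voter, at least
`θ · z i` against any `θ`-approximate Lindahl prices, because `y i / z i` covers `u i + 1`
approved candidates fractionally and so costs at least as much as the cheapest such set
(an exchange argument). Strong duality: if `a` is not a Lindahl ratio, the image of the
budget polytope under `p ↦ (∑ j ∈ T, p i j)_{(i, T)}` misses the open orthant above `a`;
Hahn–Banach yields a probability vector `μ` on the deviations `(i, T)`, and the `μ`-mixture of
the deviations is a feasible point of the audit LP; testing it against the prices that give each
candidate's whole budget to a voter with the largest `y i j` bounds its value by `a`.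
When the ratios are unbounded the LP is infeasible, and both sides are `0` by the conventions
for `sSup` and `sInf` on `ℝ`.
-/

open Finset

theorem Convex.exists_sum_mul_le_lt_of_forall_exists_le {ι : Type*} [Fintype ι]
    {K : Set (ι → ℝ)} (hK : Convex ℝ K) {a : ℝ} (h : ∀ q ∈ K, ∃ c, q c ≤ a) :
    ∃ (w : ι → ℝ) (b : ℝ), (∀ q ∈ K, ∑ c, w c * q c ≤ b) ∧
      ∀ q : ι → ℝ, (∀ c, a < q c) → b < ∑ c, w c * q c := by
  classical
  let Q : Set (ι → ℝ) := ⋂ c, {q | a < q c}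
  have hQ_open : IsOpen Q :=
    isOpen_iInter_of_finite fun c ↦ isOpen_lt continuous_const (continuous_apply c)
  have hQ_convex : Convex ℝ Q := convex_iInter fun c ↦
    convex_halfSpace_gt (LinearMap.proj (R := ℝ) (φ := fun _ : ι ↦ ℝ) c).isLinear a
  have hdisj : Disjoint Q K := Set.disjoint_left.2 fun q hqQ hqK ↦ by
    obtain ⟨c, hc⟩ := h q hqK
    exact hc.not_gt (Set.mem_iInter.1 hqQ c)
  obtain ⟨f, u, hfQ, hfK⟩ := geometric_hahn_banach_open hQ_convex hQ_open hK hdisj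
  have hf : ∀ q, ∑ c, -f (fun j ↦ if c = j then 1 else 0) * q c = -f q := fun q ↦ by
    have := (f : (ι → ℝ) →L[ℝ] ℝ).toLinearMap.pi_apply_eq_sum_univ q
    simp only [ContinuousLinearMap.coe_coe] at this
    simp [this, mul_comm]
  refine ⟨fun c ↦ -f fun j ↦ if c = j then 1 else 0, -u, fun q hq ↦ ?_, fun q hq ↦ ?_⟩
  · rw [hf]; linarith [hfK q hq]
  · rw [hf]; linarith [hfQ q (Set.mem_iInter.2 hq)]

theorem Convex.exists_mem_stdSimplex_sum_mul_le {ι : Type*} [Fintype ι] {K : Set (ι → ℝ)}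
    (hK : Convex ℝ K) (hne : K.Nonempty) {a : ℝ} (h : ∀ q ∈ K, ∃ c, q c ≤ a) :
    ∃ μ ∈ stdSimplex ℝ ι, ∀ q ∈ K, ∑ c, μ c * q c ≤ a := by
  classical
  obtain ⟨w, b, below, above⟩ := hK.exists_sum_mul_le_lt_of_forall_exists_le h
  have above_const : ∀ δ > 0, b < (a + δ) * ∑ c, w c := fun δ hδ ↦ by
    have := above (fun _ ↦ a + δ) fun _ ↦ by linarith
    rwa [← sum_mul, mul_comm] at this
  have hw_nonneg : ∀ c, 0 ≤ w c := by
    intro c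
    by_contra! hwc
    -- raising the single coordinate `c` by `t` brings `∑ w q` from above `b` down to `b`
    set t := ((a + 1) * ∑ c, w c - b) / -w c
    have ht : 0 ≤ t := div_nonneg (by linarith [above_const 1 one_pos]) (by linarith)
    have := above (fun c' ↦ a + 1 + if c' = c then t else 0) fun c' ↦ by split_ifs <;> linarith
    simp only [mul_add, sum_add_distrib, mul_ite, mul_zero, sum_ite_eq', mem_univ, if_true,
      ← sum_mul] at this
    have : w c * t = -((a + 1) * ∑ c, w c - b) := by
      simp only [t]; field_simp [hwc.ne]
    linarith
  have hS : 0 < ∑ c, w c := by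
    obtain ⟨k, hk⟩ := hne
    refine (sum_nonneg fun c _ ↦ hw_nonneg c).lt_of_ne fun hS ↦ ?_
    have hw0 := (sum_eq_zero_iff_of_nonneg fun c _ ↦ hw_nonneg c).1 hS.symm
    have hk0 : ∑ c, w c * k c = 0 := sum_eq_zero fun c _ ↦ by simp [hw0 c]
    have := above_const 1 one_pos
    rw [← hS, mul_zero] at this
    linarith [below k hk]
  refine ⟨fun c ↦ w c / ∑ c, w c, ⟨fun c ↦ div_nonneg (hw_nonneg c) hS.le, ?_⟩, fun q hq ↦ ?_⟩
  · rw [← sum_div, div_self hS.ne']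
  · simp only [div_mul_eq_mul_div, ← sum_div, div_le_iff₀ hS]
    refine le_of_forall_pos_lt_add fun ε hε ↦ ?_
    have := above_const (ε / ∑ c, w c) (div_pos hε hS)
    rw [add_mul, div_mul_cancel₀ _ hS.ne'] at this
    linarith [below q hq]

theorem Finset.exists_subset_card_eq_threshold {J : Type*} [DecidableEq J] (B : Finset J)
    (c : J → ℝ) (hc : ∀ j ∈ B, 0 ≤ c j) {r : ℕ} (hr : r ≤ #B) :
    ∃ S ⊆ B, #S = r ∧ ∃ τ, 0 ≤ τ ∧ (∀ j ∈ S, c j ≤ τ) ∧ ∀ j ∈ B \ S, τ ≤ c j := by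
  obtain ⟨S, hS, hmin⟩ := (powersetCard r B).exists_min_image (fun S ↦ ∑ j ∈ S, c j)
    (powersetCard_nonempty.2 hr)
  obtain ⟨hSB, hSr⟩ := mem_powersetCard.1 hS
  refine ⟨S, hSB, hSr, ?_⟩
  obtain rfl | hSne := S.eq_empty_or_nonempty
  · exact ⟨0, le_rfl, by simp, fun j hj ↦ hc j (mem_sdiff.1 hj).1⟩
  obtain ⟨jmax, hjmax, hle⟩ := S.exists_max_image c hSne
  refine ⟨c jmax, hc jmax (hSB hjmax), hle, fun j hj ↦ ?_⟩
  obtain ⟨hjB, hjS⟩ := mem_sdiff.1 hj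
  -- exchanging `jmax` for `j` gives another `r`-subset, which costs at least as much as `S`
  have hj' : j ∉ S.erase jmax := fun h ↦ hjS (mem_of_mem_erase h)
  have hswap : insert j (S.erase jmax) ∈ powersetCard r B := by
    refine mem_powersetCard.2 ⟨insert_subset hjB ((erase_subset _ _).trans hSB), ?_⟩
    rw [card_insert_of_notMem hj', card_erase_of_mem hjmax, hSr]
    have : 0 < r := hSr ▸ hSne.card_pos
    omega
  have := hmin _ hswap
  rw [sum_insert hj', ← add_sum_erase S c hjmax] at this
  linarith

theorem Finset.exists_subset_card_eq_mul_sum_le {J : Type*} [DecidableEq J] (B : Finset J)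
    (c w : J → ℝ) (r : ℕ) {t : ℝ} (ht : 0 < t) (hc : ∀ j ∈ B, 0 ≤ c j)
    (hw : ∀ j ∈ B, 0 ≤ w j ∧ w j ≤ t) (hsum : t * r ≤ ∑ j ∈ B, w j) :
    ∃ S ⊆ B, #S = r ∧ t * ∑ j ∈ S, c j ≤ ∑ j ∈ B, w j * c j := by
  have hr : r ≤ #B := by
    have : ∑ j ∈ B, w j ≤ t * #B := by
      simpa [mul_comm] using sum_le_sum fun j hj ↦ (hw j hj).2
    exact_mod_cast le_of_mul_le_mul_left (hsum.trans this) ht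
  obtain ⟨S, hSB, hSr, τ, hτ, hSτ, hτS⟩ := B.exists_subset_card_eq_threshold c hc hr
  refine ⟨S, hSB, hSr, ?_⟩
  calc t * ∑ j ∈ S, c j = τ * (t * r) + ∑ j ∈ S, t * (c j - τ) := by
        simp only [mul_sub, sum_sub_distrib, sum_const, hSr, ← mul_sum]; ring
    _ ≤ τ * ∑ j ∈ B, w j + ∑ j ∈ S, w j * (c j - τ) := by
        refine add_le_add (mul_le_mul_of_nonneg_left hsum hτ) (sum_le_sum fun j hj ↦ ?_)
        exact mul_le_mul_of_nonpos_right (hw j (hSB hj)).2 (by linarith [hSτ j hj])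
    _ ≤ τ * ∑ j ∈ B, w j + ∑ j ∈ B, w j * (c j - τ) := by
        have := sum_le_sum_of_subset_of_nonneg hSB fun j hj hjS ↦
          mul_nonneg (hw j hj).1 (by linarith [hτS j (mem_sdiff.2 ⟨hj, hjS⟩)] : 0 ≤ c j - τ)
        linarith
    _ = ∑ j ∈ B, w j * c j := by simp only [mul_sub, sum_sub_distrib, ← sum_mul]; ring

namespace Lindahl

variable {V C : Type*} [Fintype V]

def budgetPrices (R : ℝ) : Set (V → C → ℝ) :=
  {p | (∀ i j, 0 ≤ p i j) ∧ ∀ j, ∑ i, p i j ≤ R}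

theorem convex_budgetPrices (R : ℝ) : Convex ℝ (budgetPrices (V := V) (C := C) R) := by
  rintro p ⟨hp, hpR⟩ q ⟨hq, hqR⟩ s t hs ht hst
  refine ⟨fun i j ↦ ?_, fun j ↦ ?_⟩
  · simp only [Pi.add_apply, Pi.smul_apply, smul_eq_mul]
    exact add_nonneg (mul_nonneg hs (hp i j)) (mul_nonneg ht (hq i j))
  · simp only [Pi.add_apply, Pi.smul_apply, smul_eq_mul, sum_add_distrib, ← mul_sum]
    calc s * ∑ i, p i j + t * ∑ i, q i j ≤ s * R + t * R := by gcongr <;> simp [hpR, hqR]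
      _ = R := by rw [← add_mul, hst, one_mul]

variable [Fintype C] [DecidableEq C]

def priceableRatios (A : V → Finset C) (W : Finset C) (R : ℝ) : Set ℝ :=
  {θ : ℝ | 0 ≤ θ ∧ ∃ p : V → C → ℝ,
    (∀ i j, 0 ≤ p i j) ∧
    (∀ j, ∑ i, p i j ≤ R) ∧
    ∀ (i : V) (T : Finset C), (W ∩ A i).card + 1 ≤ (T ∩ A i).card → θ < ∑ j ∈ T, p i j}

def coreAuditValues (A : V → Finset C) (W : Finset C) (R : ℝ) : Set ℝ :=
  {v : ℝ | ∃ (x : C → ℝ) (z : V → ℝ) (y : V → C → ℝ),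
    (∀ j, 0 ≤ x j) ∧ (∀ i, 0 ≤ z i) ∧ (∀ i j, 0 ≤ y i j) ∧
    (∀ i j, y i j ≤ x j) ∧ (∀ i j, y i j ≤ z i) ∧
    (∀ i, z i * (((W ∩ A i).card : ℝ) + 1) ≤ ∑ j ∈ A i, y i j) ∧
    (1 : ℝ) ≤ ∑ i, z i ∧
    v = R * (∑ j, x j) / (∑ i, z i)}

variable {A : V → Finset C} {W : Finset C} {R : ℝ}

theorem coreAuditValue_nonneg (hR : 0 ≤ R) {v : ℝ} (hv : v ∈ coreAuditValues A W R) : 0 ≤ v := by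
  obtain ⟨x, z, -, hx, -, -, -, -, -, hz1, rfl⟩ := hv
  have : 0 ≤ ∑ j, x j := sum_nonneg fun j _ ↦ hx j
  exact div_nonneg (mul_nonneg hR this) (by linarith)

theorem priceableRatio_le_coreAuditValue {θ v : ℝ} (hθ : θ ∈ priceableRatios A W R)
    (hv : v ∈ coreAuditValues A W R) : θ ≤ v := by
  obtain ⟨-, p, hp, hpR, hpT⟩ := hθ
  obtain ⟨x, z, y, hx, hz, hy, hyx, hyz, hcover, hz1, rfl⟩ := hv
  have voter : ∀ i, θ * z i ≤ ∑ j ∈ A i, y i j * p i j := fun i ↦ by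
    obtain hzi | hzi := (hz i).eq_or_lt
    · rw [← hzi, mul_zero]
      exact sum_nonneg fun j _ ↦ mul_nonneg (hy i j) (hp i j)
    obtain ⟨S, hSA, hScard, hS⟩ := (A i).exists_subset_card_eq_mul_sum_le (p i) (y i)
      ((W ∩ A i).card + 1) hzi (fun j _ ↦ hp i j) (fun j _ ↦ ⟨hy i j, hyz i j⟩)
      (by push_cast; exact hcover i)
    have hθS : θ < ∑ j ∈ S, p i j := hpT i S (by rw [inter_eq_left.2 hSA, hScard])
    calc θ * z i ≤ z i * ∑ j ∈ S, p i j := by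
          rw [mul_comm]; exact mul_le_mul_of_nonneg_left hθS.le hzi.le
      _ ≤ _ := hS
  rw [le_div_iff₀ (by linarith)]
  calc θ * ∑ i, z i ≤ ∑ i, ∑ j ∈ A i, y i j * p i j := by
        rw [mul_sum]; exact sum_le_sum fun i _ ↦ voter i
    _ ≤ ∑ i, ∑ j, y i j * p i j := sum_le_sum fun i _ ↦
        sum_le_sum_of_subset_of_nonneg (subset_univ _) fun j _ _ ↦ mul_nonneg (hy i j) (hp i j)
    _ ≤ ∑ j, x j * ∑ i, p i j := by
        rw [sum_comm]
        refine sum_le_sum fun j _ ↦ ?_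
        rw [mul_sum]
        exact sum_le_sum fun i _ ↦ mul_le_mul_of_nonneg_right (hyx i j) (hp i j)
    _ ≤ R * ∑ j, x j := by
        rw [mul_sum]
        refine sum_le_sum fun j _ ↦ ?_
        rw [mul_comm R]
        exact mul_le_mul_of_nonneg_left (hpR j) (hx j)

abbrev Deviation (A : V → Finset C) (W : Finset C) : Type _ :=
  {c : V × Finset C // (W ∩ A c.1).card + 1 ≤ (c.2 ∩ A c.1).card}

theorem exists_mem_stdSimplex_of_notMem_priceableRatios (hR : 0 ≤ R) {a : ℝ} (ha : 0 ≤ a)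
    (h : a ∉ priceableRatios A W R) :
    ∃ μ ∈ stdSimplex ℝ (Deviation A W),
      ∀ p ∈ budgetPrices R, ∑ c, μ c * ∑ j ∈ c.1.2, p c.1.1 j ≤ a := by
  let L : (V → C → ℝ) →ₗ[ℝ] (Deviation A W → ℝ) :=
    { toFun p c := ∑ j ∈ c.1.2, p c.1.1 j
      map_add' p q := by ext c; simp [sum_add_distrib]
      map_smul' s p := by ext c; simp [mul_sum] }
  have hzero : (0 : V → C → ℝ) ∈ budgetPrices R := ⟨fun _ _ ↦ le_rfl, fun _ ↦ by simpa using hR⟩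
  have hdev : ∀ q ∈ L '' budgetPrices R, ∃ c, q c ≤ a := by
    rintro _ ⟨p, ⟨hp, hpR⟩, rfl⟩
    simp only [priceableRatios, Set.mem_ofPred_eq, not_and, not_exists, not_forall, not_lt] at h
    obtain ⟨i, T, hT, hle⟩ := h ha p hp hpR
    exact ⟨⟨(i, T), hT⟩, hle⟩
  obtain ⟨μ, hμ, hle⟩ := ((convex_budgetPrices R).linear_image L).exists_mem_stdSimplex_sum_mul_le
    ⟨L 0, 0, hzero, rfl⟩ hdev
  exact ⟨μ, hμ, fun p hp ↦ hle _ ⟨p, hp, rfl⟩⟩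

section Mixture

variable [DecidableEq V] (μ : Deviation A W → ℝ)

def mixtureZ (i : V) : ℝ := ∑ c, if c.1.1 = i then μ c else 0

def mixtureY (i : V) (j : C) : ℝ := ∑ c, if c.1.1 = i ∧ j ∈ c.1.2 then μ c else 0

variable {μ}

theorem sum_mixtureZ : ∑ i, mixtureZ μ i = ∑ c, μ c := by
  simp only [mixtureZ]
  rw [sum_comm]
  simp

theorem sum_mul_sum_eq_sum_mixtureY_mul (p : V → C → ℝ) :
    ∑ c, μ c * ∑ j ∈ c.1.2, p c.1.1 j = ∑ i, ∑ j, mixtureY μ i j * p i j := by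
  simp only [mixtureY, sum_mul, ite_mul, zero_mul, mul_sum]
  conv_rhs => enter [2, i]; rw [sum_comm]
  rw [sum_comm]
  refine sum_congr rfl fun c _ ↦ ?_
  simp [ite_and, sum_ite_eq]

theorem mixtureZ_mul_le_sum_mixtureY (hμ : ∀ c, 0 ≤ μ c) (i : V) :
    mixtureZ μ i * (((W ∩ A i).card : ℝ) + 1) ≤ ∑ j ∈ A i, mixtureY μ i j := by
  simp only [mixtureZ, mixtureY, sum_mul]
  rw [sum_comm]
  refine sum_le_sum fun c _ ↦ ?_
  by_cases hci : c.1.1 = i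
  · subst hci
    simp only [true_and, if_true, sum_ite_mem, sum_const, nsmul_eq_mul, inter_comm (A _)]
    rw [mul_comm]
    gcongr
    · exact hμ c
    · exact_mod_cast c.2
  · simp [hci]

theorem exists_coreAuditValue_le_of_mem_stdSimplex (hR : 0 ≤ R)
    (hμ : μ ∈ stdSimplex ℝ (Deviation A W)) {a : ℝ}
    (ha : ∀ p ∈ budgetPrices R, ∑ c, μ c * ∑ j ∈ c.1.2, p c.1.1 j ≤ a) :
    ∃ v ∈ coreAuditValues A W R, v ≤ a := by
  obtain ⟨hμ0, hμ1⟩ := hμ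
  have hz1 : ∑ i, mixtureZ μ i = 1 := sum_mixtureZ.trans hμ1
  have : Nonempty V := by
    obtain ⟨c, -⟩ := exists_ne_zero_of_sum_ne_zero (hμ1.trans_ne one_ne_zero)
    exact ⟨c.1.1⟩
  choose best hbest using fun j ↦ Finite.exists_max (mixtureY μ · j)
  let pbest (i : V) (j : C) : ℝ := if i = best j then R else 0
  have hpbest : pbest ∈ budgetPrices R :=
    ⟨fun i j ↦ by simp only [pbest]; split_ifs <;> simp [hR], fun j ↦ by simp [pbest]⟩
  have hval : ∑ i, ∑ j, mixtureY μ i j * pbest i j = R * ∑ j, mixtureY μ (best j) j := by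
    rw [sum_comm, mul_sum]
    simp [pbest, mul_comm]
  refine ⟨R * (∑ j, mixtureY μ (best j) j) / ∑ i, mixtureZ μ i,
    ⟨fun j ↦ mixtureY μ (best j) j, mixtureZ μ, mixtureY μ, ?_, ?_, ?_, fun i j ↦ hbest j i, ?_,
      mixtureZ_mul_le_sum_mixtureY hμ0, hz1.ge, rfl⟩, ?_⟩
  · exact fun j ↦ sum_nonneg fun c _ ↦ by split_ifs <;> simp [hμ0]
  · exact fun i ↦ sum_nonneg fun c _ ↦ by split_ifs <;> simp [hμ0]
  · exact fun i j ↦ sum_nonneg fun c _ ↦ by split_ifs <;> simp [hμ0]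
  · exact fun i j ↦ sum_le_sum fun c _ ↦ by
      split_ifs <;> first | exact le_rfl | exact hμ0 c | tauto
  · rw [hz1, div_one, ← hval, ← sum_mul_sum_eq_sum_mixtureY_mul]
    exact ha pbest hpbest

end Mixture

theorem exists_coreAuditValue_le_of_notMem_priceableRatios (hR : 0 ≤ R) {a : ℝ} (ha : 0 ≤ a)
    (h : a ∉ priceableRatios A W R) : ∃ v ∈ coreAuditValues A W R, v ≤ a := by
  classical
  obtain ⟨μ, hμ, hle⟩ := exists_mem_stdSimplex_of_notMem_priceableRatios hR ha h
  exact exists_coreAuditValue_le_of_mem_stdSimplex hR hμ hle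

theorem sSup_priceableRatios_eq_sInf_coreAuditValues (A : V → Finset C) (W : Finset C)
    (hR : 0 ≤ R) : sSup (priceableRatios A W R) = sInf (coreAuditValues A W R) := by
  by_cases hbdd : BddAbove (priceableRatios A W R)
  · set s := sSup (priceableRatios A W R)
    have near : ∀ ε > 0, ∃ v ∈ coreAuditValues A W R, v ≤ s + ε := fun ε hε ↦
      exists_coreAuditValue_le_of_notMem_priceableRatios hR
        (by linarith [Real.sSup_nonneg fun θ (hθ : θ ∈ priceableRatios A W R) ↦ hθ.1])
        fun hmem ↦ by linarith [le_csSup hbdd hmem]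
    obtain ⟨v, hv, -⟩ := near 1 one_pos
    refine (csInf_eq_of_forall_ge_of_forall_gt_exists_lt ⟨v, hv⟩ (fun v hv ↦ ?_) fun w hw ↦ ?_).symm
    · exact Real.sSup_le (fun θ hθ ↦ priceableRatio_le_coreAuditValue hθ hv)
        (coreAuditValue_nonneg hR hv)
    · obtain ⟨v, hv, hvs⟩ := near ((w - s) / 2) (by linarith)
      exact ⟨v, hv, by linarith⟩
  · have : coreAuditValues A W R = ∅ := Set.eq_empty_of_forall_notMem fun v hv ↦
      hbdd ⟨v, fun θ hθ ↦ priceableRatio_le_coreAuditValue hθ hv⟩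
    rw [Real.sSup_of_not_bddAbove hbdd, this, Real.sInf_empty]

end Lindahl

theorem lindahl_ratio_eq_lp_value_general
    (n m k : ℕ)
    (A : Fin n → Finset (Fin m)) (W : Finset (Fin m)) :
    sSup {θ : ℝ | 0 ≤ θ ∧ ∃ p : Fin n → Fin m → ℝ,
        (∀ i j, 0 ≤ p i j) ∧
        (∀ j, ∑ i, p i j ≤ (n : ℝ) / k) ∧
        ∀ (i : Fin n) (T : Finset (Fin m)),
          (W ∩ A i).card + 1 ≤ (T ∩ A i).card → θ < ∑ j ∈ T, p i j}
    = sInf {v : ℝ | ∃ (x : Fin m → ℝ) (z : Fin n → ℝ) (y : Fin n → Fin m → ℝ),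
        (∀ j, 0 ≤ x j) ∧ (∀ i, 0 ≤ z i) ∧ (∀ i j, 0 ≤ y i j) ∧
        (∀ i j, y i j ≤ x j) ∧ (∀ i j, y i j ≤ z i) ∧
        (∀ i, z i * (((W ∩ A i).card : ℝ) + 1) ≤ ∑ j ∈ A i, y i j) ∧
        (1 : ℝ) ≤ ∑ i, z i ∧
        v = (n : ℝ) / k * (∑ j, x j) / (∑ i, z i)} := by
  exact Lindahl.sSup_priceableRatios_eq_sInf_coreAuditValues A W (by positivity)

/-- The Lindahl priceability ratio `θ_ℓ` of a committee `W` equals the optimal value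
`θ_p` of the LP relaxation of the core auditing program; in particular, testing Lindahl
priceability reduces to solving this LP. -/
theorem lindahl_ratio_eq_lp_value
    (n m k : ℕ) (hn : 0 < n) (hm : 0 < m) (hk : 0 < k)
    (A : Fin n → Finset (Fin m)) (W : Finset (Fin m)) (hW : W.card ≤ k) :
    sSup {θ : ℝ | 0 ≤ θ ∧ ∃ p : Fin n → Fin m → ℝ,
        (∀ i j, 0 ≤ p i j) ∧
        (∀ j, ∑ i, p i j ≤ (n : ℝ) / k) ∧
        ∀ (i : Fin n) (T : Finset (Fin m)),
          (W ∩ A i).card + 1 ≤ (T ∩ A i).card → θ < ∑ j ∈ T, p i j}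
    = sInf {v : ℝ | ∃ (x : Fin m → ℝ) (z : Fin n → ℝ) (y : Fin n → Fin m → ℝ),
        (∀ j, 0 ≤ x j) ∧ (∀ i, 0 ≤ z i) ∧ (∀ i j, 0 ≤ y i j) ∧
        (∀ i j, y i j ≤ x j) ∧ (∀ i j, y i j ≤ z i) ∧
        (∀ i, z i * (((W ∩ A i).card : ℝ) + 1) ≤ ∑ j ∈ A i, y i j) ∧
        (1 : ℝ) ≤ ∑ i, z i ∧
        v = (n : ℝ) / k * (∑ j, x j) / (∑ i, z i)} :=
  lindahl_ratio_eq_lp_value_general n m k A W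
end

section
/- In the reduction from 3-regular maximal independent set: given a 3-regular graph G = (U, E) augmented by a new vertex s adjacent to every u ∈ U, form the approval election where candidates are vertices and each edge is a voter approving its two endpoints, with k = (|E| + |U|)(q+1)/(q(D+1)) and D = 3. If G has an independent set of size q, then the committee W = {s} does not lie in the sub-core. -/
/-!
Let `T = I ∪ {s}` and let `S` consist of the edges of `G` at `I` together with the apex edges
`{s, u}`, `u ∈ I`. As `I` is independent, these are `q D + q` distinct voters, so the quota
`|S| k / n` equals `q + 1 = |T|`. Every voter of `S` approves a vertex of `I`, which `W = {s}`
lacks, while `s ∈ T`; so each of them strictly prefers `T`.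
-/

attribute [local instance] Classical.propDecidable

/-- Approval sets of the election constructed from a graph `G` augmented by an apex
vertex `s` (encoded as `none : Option V`): the voters are the edges of `G` together with
the apex edges (one per vertex of `V`), each approving its two endpoint candidates. -/
noncomputable def redApprove {V : Type} [Fintype V] [DecidableEq V]
    (G : SimpleGraph V) [DecidableRel G.Adj] :
    (↥G.edgeFinset ⊕ V) → Finset (Option V)
  | Sum.inl e => Finset.univ.filter (fun c => ∃ u, c = some u ∧ u ∈ (e.1 : Sym2 V))
  | Sum.inr u => {none, some u}

/-- No edge meets an independent set twice. -/
theorem SimpleGraph.IsIndepSet.card_biUnion_incidenceFinset {V : Type} [Fintype V]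
    [DecidableEq V] {G : SimpleGraph V} [DecidableRel G.Adj] {I : Finset V}
    (hI : G.IsIndepSet (I : Set V)) :
    (I.biUnion fun u => G.incidenceFinset u).card = ∑ u ∈ I, G.degree u := by
  rw [Finset.card_biUnion]
  · exact Finset.sum_congr rfl fun u _ => G.card_incidenceFinset_eq_degree u
  · intro u hu v hv huv
    refine Finset.disjoint_left.2 fun e heu hev => hI hu hv huv ?_
    rw [SimpleGraph.mem_incidenceFinset] at heu hev
    exact G.adj_of_mem_incidenceSet huv heu hev

noncomputable def SimpleGraph.incidentEdges {V : Type} [Fintype V] [DecidableEq V]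
    (G : SimpleGraph V) [DecidableRel G.Adj] (I : Finset V) : Finset G.edgeFinset :=
  (I.biUnion fun u => G.incidenceFinset u).subtype (· ∈ G.edgeFinset)

theorem SimpleGraph.IsRegularOfDegree.card_incidentEdges_of_isIndepSet {V : Type} [Fintype V]
    [DecidableEq V] {G : SimpleGraph V} [DecidableRel G.Adj] {d : ℕ}
    (hreg : G.IsRegularOfDegree d) {I : Finset V} (hI : G.IsIndepSet (I : Set V)) :
    (G.incidentEdges I).card = d * I.card := by
  rw [SimpleGraph.incidentEdges, Finset.card_subtype, Finset.filter_true_of_mem,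
    hI.card_biUnion_incidenceFinset, Finset.sum_congr rfl fun u _ => hreg u, Finset.sum_const,
    smul_eq_mul, mul_comm]
  intro e he
  obtain ⟨u, -, hue⟩ := Finset.mem_biUnion.1 he
  exact G.incidenceFinset_subset u hue

theorem Finset.inter_singleton_ssubset_inter {α : Type*} [DecidableEq α] {s t : Finset α}
    {a b : α} (ha : a ∈ t) (hb : b ∈ s ∩ t) (hba : b ≠ a) : s ∩ {a} ⊂ s ∩ t := by
  have hsub : s ∩ {a} ⊆ s ∩ t :=
    Finset.inter_subset_inter_left (Finset.singleton_subset_iff.2 ha)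
  exact (Finset.ssubset_iff_of_subset hsub).2 ⟨b, hb, by simp [hba]⟩

/-- The bound `|S| k / n` on the deviating committee, for `|S| = q (D + 1)` voters and the
committee size `k = n (q + 1) / (q (D + 1))` of the reduction. -/
theorem mul_div_mul_div_self_eq {n q D : ℝ} (hn : n ≠ 0) (hq : q ≠ 0) (hD : D + 1 ≠ 0) :
    q * (D + 1) * (n * (q + 1) / (q * (D + 1))) / n = q + 1 := by
  field_simp

theorem exists_some_mem_redApprove_of_mem_disjSum {V : Type} [Fintype V] [DecidableEq V]
    {G : SimpleGraph V} [DecidableRel G.Adj] {I : Finset V} {i : ↥G.edgeFinset ⊕ V}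
    (hi : i ∈ (G.incidentEdges I).disjSum I) :
    ∃ u ∈ I, some u ∈ redApprove G i := by
  rcases i with e | u
  · have he : e ∈ G.incidentEdges I := Finset.inl_mem_disjSum.1 hi
    obtain ⟨u, hu, hue⟩ := Finset.mem_biUnion.1 (Finset.mem_subtype.1 he)
    refine ⟨u, hu, ?_⟩
    simpa [redApprove] using ((G.mem_incidenceFinset u _).1 hue).2
  · exact ⟨u, Finset.inr_mem_disjSum.1 hi, by simp [redApprove]⟩

/-- 'YES' direction of the 3-regular maximal independent set reduction: if the 3-regular
graph `G` has an independent set of size `q`, then in the constructed approval election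
(with `n = |E| + |U|` voters and `k = n(q+1)/(q(D+1))`, `D = 3`) the committee
`W = {s}` does not lie in the sub-core. -/
theorem independent_set_gives_subcore_deviation
    {V : Type} [Fintype V] [DecidableEq V]
    (G : SimpleGraph V) [DecidableRel G.Adj]
    (hreg : G.IsRegularOfDegree 3)
    (q : ℕ) (hq : 1 ≤ q)
    (I : Finset V) (hIcard : I.card = q)
    (hind : ∀ u ∈ I, ∀ v ∈ I, ¬ G.Adj u v) :
    ∃ (S : Finset (↥G.edgeFinset ⊕ V)) (T : Finset (Option V)),
      S.Nonempty ∧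
      (T.card : ℝ) ≤ (S.card : ℝ) *
        (((G.edgeFinset.card + Fintype.card V : ℕ) : ℝ) * (q + 1) / (q * (3 + 1))) /
        ((G.edgeFinset.card + Fintype.card V : ℕ) : ℝ) ∧
      ∀ i ∈ S, redApprove G i ∩ ({none} : Finset (Option V)) ⊂ redApprove G i ∩ T := by
  have hI : G.IsIndepSet (I : Set V) := fun u hu v hv _ => hind u hu v hv
  obtain ⟨v₀, hv₀⟩ : I.Nonempty := Finset.card_pos.1 (by omega)
  set S := (G.incidentEdges I).disjSum I
  set T := insert none (I.image some)
  have hS : S.card = q * (3 + 1) := by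
    rw [Finset.card_disjSum, hreg.card_incidentEdges_of_isIndepSet hI, hIcard]
    ring
  have hT : T.card = q + 1 := by
    rw [Finset.card_insert_of_notMem (by simp),
      Finset.card_image_of_injective _ (Option.some_injective V), hIcard]
  have hn : ((G.edgeFinset.card + Fintype.card V : ℕ) : ℝ) ≠ 0 := by
    have : 0 < Fintype.card V := Fintype.card_pos_iff.2 ⟨v₀⟩
    positivity
  refine ⟨S, T, ⟨Sum.inr v₀, Finset.inr_mem_disjSum.2 hv₀⟩, ?_, fun i hi => ?_⟩
  · have hq₀ : (q : ℝ) ≠ 0 := by exact_mod_cast (by omega : q ≠ 0)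
    rw [hS, hT]
    exact_mod_cast (mul_div_mul_div_self_eq hn hq₀ (by norm_num : (3 : ℝ) + 1 ≠ 0)).ge
  · obtain ⟨u, hu, hui⟩ := exists_some_mem_redApprove_of_mem_disjSum hi
    exact Finset.inter_singleton_ssubset_inter (Finset.mem_insert_self _ _)
      (Finset.mem_inter.2 ⟨hui, Finset.mem_insert_of_mem (Finset.mem_image_of_mem _ hu)⟩)
      (Option.some_ne_none u)
end

section
/- In the graph reduction from 3-regular subgraphs: given a Hamiltonian graph G = (V, E) with maximum degree 6 and n vertices, take voters = vertices (each approving her incident edges), candidates = edges, committee W = edges of a Hamiltonian cycle, and k = 3n/2 (so R = 2/3). Then W lies in the core if and only if G has no 3-regular subgraph. -/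
/-!
Along a Hamiltonian cycle every vertex meets exactly two committee edges, so a deviating
coalition `(V', E')` needs `E'`-degree at least `3` at each of its vertices. Counting
incidences, `3 |V'| ≤ ∑_{v ∈ V'} deg_{E'} v ≤ 2 |E'|`, while the budget of the coalition is
`2 |E'| ≤ 3 |V'|`. Hence both inequalities are equalities: every vertex of `V'` has
`E'`-degree exactly `3` and every edge of `E'` has both ends in `V'`, i.e. `(V', E')` is a
3-regular subgraph. Conversely a 3-regular subgraph spends exactly its budget.
-/

open Finset

namespace Finset

variable {α : Type*} [DecidableEq α] (s : Finset α) (E : Finset (Sym2 α))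

lemma filter_mem_sym2_eq_inter_toFinset (e : Sym2 α) :
    {v ∈ s | v ∈ e} = s ∩ e.toFinset := by
  ext v
  simp

lemma card_filter_mem_sym2_le_two (e : Sym2 α) : #{v ∈ s | v ∈ e} ≤ 2 := by
  rw [filter_mem_sym2_eq_inter_toFinset]
  calc #(s ∩ e.toFinset) ≤ #e.toFinset := card_le_card inter_subset_right
    _ ≤ 2 := by rw [Sym2.card_toFinset]; split_ifs <;> norm_num

lemma card_filter_mem_sym2_eq_two_iff {e : Sym2 α} (he : ¬e.IsDiag) :
    #{v ∈ s | v ∈ e} = 2 ↔ ∀ v ∈ e, v ∈ s := by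
  rw [filter_mem_sym2_eq_inter_toFinset, ← Sym2.card_toFinset_of_not_isDiag e he]
  constructor
  · intro h v hv
    have hsub : e.toFinset ⊆ s := inter_eq_right.mp <|
      eq_of_subset_of_card_le inter_subset_right h.ge
    exact hsub (Sym2.mem_toFinset.mpr hv)
  · intro h
    rw [inter_eq_right.mpr fun v hv => h v (Sym2.mem_toFinset.mp hv)]

lemma sum_card_filter_mem_sym2_comm :
    ∑ v ∈ s, #{e ∈ E | v ∈ e} = ∑ e ∈ E, #{v ∈ s | v ∈ e} := by
  simp_rw [card_filter]
  exact sum_comm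

lemma sum_card_filter_mem_sym2_le : ∑ v ∈ s, #{e ∈ E | v ∈ e} ≤ 2 * #E := by
  rw [sum_card_filter_mem_sym2_comm, mul_comm, ← smul_eq_mul, ← sum_const]
  exact sum_le_sum fun e _ => card_filter_mem_sym2_le_two s e

lemma sum_card_filter_mem_sym2_eq_iff (hE : ∀ e ∈ E, ¬e.IsDiag) :
    ∑ v ∈ s, #{e ∈ E | v ∈ e} = 2 * #E ↔ ∀ e ∈ E, ∀ v ∈ e, v ∈ s := by
  rw [sum_card_filter_mem_sym2_comm, mul_comm, ← smul_eq_mul, ← sum_const,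
    sum_eq_sum_iff_of_le fun e _ => card_filter_mem_sym2_le_two s e]
  exact forall₂_congr fun e he => card_filter_mem_sym2_eq_two_iff s (hE e he)

lemma forall_mem_and_card_filter_mem_sym2_eq_three (hE : ∀ e ∈ E, ¬e.IsDiag)
    (hcard : 2 * #E ≤ 3 * #s) (hdeg : ∀ v ∈ s, 3 ≤ #{e ∈ E | v ∈ e}) :
    (∀ e ∈ E, ∀ v ∈ e, v ∈ s) ∧ ∀ v ∈ s, #{e ∈ E | v ∈ e} = 3 := by
  have hlower : ∑ _v ∈ s, 3 ≤ ∑ v ∈ s, #{e ∈ E | v ∈ e} := sum_le_sum hdeg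
  have hupper := sum_card_filter_mem_sym2_le s E
  rw [sum_const, smul_eq_mul] at hlower
  refine ⟨(sum_card_filter_mem_sym2_eq_iff s E hE).mp (by omega), fun v hv => ?_⟩
  have hsum : ∑ _v ∈ s, 3 = ∑ v ∈ s, #{e ∈ E | v ∈ e} := by
    rw [sum_const, smul_eq_mul]
    omega
  exact ((sum_eq_sum_iff_of_le hdeg).mp hsum v hv).symm

lemma two_mul_card_eq_of_forall_card_filter_mem_sym2_eq_three (hE : ∀ e ∈ E, ¬e.IsDiag)
    (hin : ∀ e ∈ E, ∀ v ∈ e, v ∈ s) (hdeg : ∀ v ∈ s, #{e ∈ E | v ∈ e} = 3) :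
    2 * #E = 3 * #s := by
  rw [← (sum_card_filter_mem_sym2_eq_iff s E hE).mpr hin, sum_congr rfl hdeg, sum_const,
    smul_eq_mul, mul_comm]

end Finset

namespace SimpleGraph

variable {V : Type} [DecidableEq V] {G : SimpleGraph V}

lemma Walk.IsCycle.card_filter_mem_edges {u v : V} {p : G.Walk u u} (hp : p.IsCycle)
    (hv : v ∈ p.support) : #{e ∈ p.edges.toFinset | v ∈ e} = 2 := by
  have himage : (({e ∈ p.edges.toFinset | v ∈ e} : Finset _) : Set (Sym2 V)) =
      (s(v, ·)) '' p.toSubgraph.neighborSet v := by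
    ext e
    simp only [coe_filter, List.mem_toFinset, Set.mem_ofPred_eq, Set.mem_image,
      Subgraph.mem_neighborSet, Walk.adj_toSubgraph_iff_mem_edges]
    constructor
    · rintro ⟨he, hve⟩
      obtain ⟨w, rfl⟩ := Sym2.mem_iff_exists.mp hve
      exact ⟨w, he, rfl⟩
    · rintro ⟨w, hw, rfl⟩
      exact ⟨hw, Sym2.mem_mk_left v w⟩
  rw [← Set.ncard_coe_finset, himage,
    Set.ncard_image_of_injective _ fun _ _ => Sym2.congr_right.mp,
    hp.ncard_neighborSet_toSubgraph_eq_two hv]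

variable [Fintype V] [DecidableRel G.Adj]

lemma inter_incidenceFinset_eq_filter {E : Finset (Sym2 V)} (hE : E ⊆ G.edgeFinset) (v : V) :
    E ∩ G.incidenceFinset v = {e ∈ E | v ∈ e} := by
  rw [incidenceFinset_eq_filter, inter_filter, inter_eq_left.mpr hE]

lemma Walk.IsHamiltonianCycle.card_edges_inter_incidenceFinset {u : V} {p : G.Walk u u}
    (hp : p.IsHamiltonianCycle) (v : V) :
    #(p.edges.toFinset ∩ G.incidenceFinset v) = 2 := by
  have hsub : p.edges.toFinset ⊆ G.edgeFinset := fun e he =>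
    mem_edgeFinset.mpr (p.edges_subset_edgeSet (List.mem_toFinset.mp he))
  rw [inter_incidenceFinset_eq_filter hsub]
  exact hp.isCycle.card_filter_mem_edges (hp.mem_support v)

end SimpleGraph

lemma le_mul_three_halves_iff {n : ℕ} (hn : n ≠ 0) (a b : ℕ) :
    (a : ℝ) ≤ b * (3 * n / 2) / n ↔ 2 * a ≤ 3 * b := by
  have hn' : (n : ℝ) ≠ 0 := Nat.cast_ne_zero.mpr hn
  rw [show (b : ℝ) * (3 * n / 2) / n = 3 * b / 2 by field_simp, le_div_iff₀ two_pos, mul_comm]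
  norm_cast

theorem hamiltonian_core_iff_no_three_regular_subgraph_general
    {V : Type} [Fintype V] [DecidableEq V]
    (G : SimpleGraph V) [DecidableRel G.Adj]
    (v₀ : V) (c : G.Walk v₀ v₀) (hc : c.IsHamiltonianCycle)
    (W : Finset (Sym2 V)) (hW : W = c.edges.toFinset) :
    (¬ ∃ (V' : Finset V) (E' : Finset (Sym2 V)), V'.Nonempty ∧ E' ⊆ G.edgeFinset ∧
        (E'.card : ℝ) ≤ (V'.card : ℝ) *
          (3 * (Fintype.card V : ℝ) / 2) / (Fintype.card V : ℝ) ∧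
        ∀ v ∈ V', (W ∩ G.incidenceFinset v).card < (E' ∩ G.incidenceFinset v).card)
    ↔
    (¬ ∃ (V' : Finset V) (E' : Finset (Sym2 V)), V'.Nonempty ∧ E' ⊆ G.edgeFinset ∧
        (∀ e ∈ E', ∀ v, v ∈ e → v ∈ V') ∧
        ∀ v ∈ V', (E' ∩ G.incidenceFinset v).card = 3) := by
  subst hW
  have hn : Fintype.card V ≠ 0 := (Fintype.card_pos_iff.mpr ⟨v₀⟩).ne'
  have hWdeg := hc.card_edges_inter_incidenceFinset
  have hdiag {E' : Finset (Sym2 V)} (hE' : E' ⊆ G.edgeFinset) : ∀ e ∈ E', ¬e.IsDiag :=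
    fun e he => G.not_isDiag_of_mem_edgeSet (SimpleGraph.mem_edgeFinset.mp (hE' he))
  refine not_congr ⟨?_, ?_⟩
  · rintro ⟨V', E', hV', hE', hcard, hdom⟩
    have h3 : ∀ v ∈ V', 2 < #{e ∈ E' | v ∈ e} := fun v hv => by
      simpa only [hWdeg, SimpleGraph.inter_incidenceFinset_eq_filter hE'] using hdom v hv
    obtain ⟨hin, hreg⟩ := forall_mem_and_card_filter_mem_sym2_eq_three V' E' (hdiag hE')
      ((le_mul_three_halves_iff hn _ _).mp hcard) h3
    exact ⟨V', E', hV', hE', hin, fun v hv => by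
      rw [SimpleGraph.inter_incidenceFinset_eq_filter hE', hreg v hv]⟩
  · rintro ⟨V', E', hV', hE', hin, hreg⟩
    simp only [SimpleGraph.inter_incidenceFinset_eq_filter hE'] at hreg
    refine ⟨V', E', hV', hE', (le_mul_three_halves_iff hn _ _).mpr ?_, fun v hv => ?_⟩
    · exact (two_mul_card_eq_of_forall_card_filter_mem_sym2_eq_three V' E' (hdiag hE') hin
        hreg).le
    · rw [hWdeg, SimpleGraph.inter_incidenceFinset_eq_filter hE', hreg v hv]
      norm_num

/-- The 3-regular-subgraph reduction: in the approval election whose voters are the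
vertices of a Hamiltonian graph `G` of maximum degree 6 (each approving her incident
edges), whose candidates are the edges of `G`, with committee `W` the edge set of a
Hamiltonian cycle and `k = 3n/2` (so `R = 2/3` and the deviation budget for a voter set
`V'` is `|V'|·k/n = (3/2)|V'|`), the committee `W` lies in the core if and only if
`G` has no 3-regular subgraph. -/
theorem hamiltonian_core_iff_no_three_regular_subgraph
    {V : Type} [Fintype V] [DecidableEq V]
    (G : SimpleGraph V) [DecidableRel G.Adj]
    (hdeg : ∀ v, G.degree v ≤ 6)
    (v₀ : V) (c : G.Walk v₀ v₀) (hc : c.IsHamiltonianCycle)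
    (W : Finset (Sym2 V)) (hW : W = c.edges.toFinset) :
    (¬ ∃ (V' : Finset V) (E' : Finset (Sym2 V)), V'.Nonempty ∧ E' ⊆ G.edgeFinset ∧
        (E'.card : ℝ) ≤ (V'.card : ℝ) *
          (3 * (Fintype.card V : ℝ) / 2) / (Fintype.card V : ℝ) ∧
        ∀ v ∈ V', (W ∩ G.incidenceFinset v).card < (E' ∩ G.incidenceFinset v).card)
    ↔
    (¬ ∃ (V' : Finset V) (E' : Finset (Sym2 V)), V'.Nonempty ∧ E' ⊆ G.edgeFinset ∧
        (∀ e ∈ E', ∀ v, v ∈ e → v ∈ V') ∧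
        ∀ v ∈ V', (E' ∩ G.incidenceFinset v).card = 3) :=
  hamiltonian_core_iff_no_three_regular_subgraph_general G v₀ c hc W hW
end
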